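/- Let λ_0 < λ_1 < ... < λ_g be reals, L > 2∑_{i=1}^g (λ_i - λ_0), p_i = L - 2∑_{j=1}^g min(λ_i - λ_0, λ_j - λ_0) for 1 ≤ i ≤ g, and p_0 = L. Define the g×g matrix K by K_{ii} = p_{i-1} + p_i + 2(λ_i - λ_{i-1}), K_{i,i+1} = K_{i+1,i} = -p_i, and K_{ij} = 0 for |i-j| ≥ 2. Then 0 < p_g < p_{g-1} < ... < p_1, and the row sums of K are positive: ∑_{j=1}^g K_{ij} > 0 for every i. -/

import Mathlib

/-!
Since `λ` is increasing, `∑ⱼ min(λᵢ - λ₀, λⱼ - λ₀)` strictly increases with `i`, so `pᵢ`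
strictly decreases; at `i = g` every minimum is `λⱼ - λ₀`, so `p_g = L - 2∑ⱼ (λⱼ - λ₀) > 0`.
In each row of `K` the off-diagonal entries `-pᵢ` cancel the matching diagonal terms, so the
row sum is `2(λᵢ - λᵢ₋₁)`, plus `p₀` in the first row and `p_g` in the last.
-/

open Finset

/-- The tridiagonal period matrix of the tropical spectral curve, in 0-based
indexing: row `a` corresponds to the 1-based index `a+1`. -/
noncomputable def periodK (g : ℕ) (lam p : ℕ → ℝ) : Matrix (Fin g) (Fin g) ℝ :=
  fun a b =>
    if a = b then p a.val + p (a.val + 1) + 2 * (lam (a.val + 1) - lam a.val)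
    else if a.val + 1 = b.val then -p (a.val + 1)
    else if b.val + 1 = a.val then -p (b.val + 1)
    else 0

theorem Fin.sum_ite_val_eq {M : Type*} [AddCommMonoid M] (g n : ℕ) (c : M) :
    ∑ b : Fin g, (if n = b.val then c else 0) = if n < g then c else 0 := by
  simp [Fin.sum_univ_eq_sum_range (fun i => if n = i then c else 0)]

theorem periodK_row_sum (g : ℕ) (lam p : ℕ → ℝ) (a : Fin g) :
    ∑ b, periodK g lam p a b = 2 * (lam (a + 1) - lam a) + (if (a : ℕ) = 0 then p 0 else 0)
      + (if (a : ℕ) + 1 = g then p g else 0) := by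
  obtain ⟨n, hn⟩ := a
  have hentry : ∀ b : Fin g, periodK g lam p ⟨n, hn⟩ b =
      (if n = b.val then p n + p (n + 1) + 2 * (lam (n + 1) - lam n) else 0)
      + (if n + 1 = b.val then -p (n + 1) else 0)
      + (if n = b.val + 1 then -p n else 0) := by
    intro b
    simp only [periodK, Fin.ext_iff]
    split_ifs <;> (try subst_vars) <;> first | omega | ring
  simp only [hentry, sum_add_distrib]
  rcases n with _ | k <;> simp [hn, Fin.sum_ite_val_eq] <;> split_ifs <;> (try subst_vars) <;>
    first | omega | ring

theorem periodK_row_sum_pos {g : ℕ} {lam p : ℕ → ℝ} (hlam : ∀ i, i < g → lam i < lam (i + 1))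
    (hp0 : 0 ≤ p 0) (hpg : 0 ≤ p g) (a : Fin g) : 0 < ∑ b, periodK g lam p a b := by
  rw [periodK_row_sum]
  have := hlam a a.isLt
  split_ifs <;> linarith

theorem sum_min_lt_sum_min {ι α : Type*} [AddCommMonoid α] [LinearOrder α]
    [IsOrderedCancelAddMonoid α] {s : Finset ι} {f : ι → α} {x y : α} (hxy : x < y) {j : ι}
    (hj : j ∈ s) (hxj : x < f j) : ∑ i ∈ s, min x (f i) < ∑ i ∈ s, min y (f i) :=
  sum_lt_sum (fun _ _ => min_le_min_right _ hxy.le)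
    ⟨j, hj, by rw [min_eq_left hxj.le]; exact lt_min hxy hxj⟩

theorem p_decreasing_and_row_sums_pos_general (g : ℕ) (L : ℝ) (lam p : ℕ → ℝ)
    (hlam : ∀ i, i < g → lam i < lam (i + 1))
    (hL : 2 * ∑ i ∈ Finset.Icc 1 g, (lam i - lam 0) < L)
    (hp0 : p 0 = L)
    (hp : ∀ i, 1 ≤ i → i ≤ g →
      p i = L - 2 * ∑ j ∈ Finset.Icc 1 g, min (lam i - lam 0) (lam j - lam 0)) :
    (0 < p g) ∧ (∀ i, 1 ≤ i → i < g → p (i + 1) < p i) ∧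
      (∀ a : Fin g, 0 < ∑ b, periodK g lam p a b) := by
  have hmono : MonotoneOn lam (Set.Iic g) := (strictMonoOn_Iic_of_lt_succ hlam).monotoneOn
  have hle : ∀ i j, i ≤ j → j ≤ g → lam i ≤ lam j := fun i j hij hj =>
    hmono (Set.mem_Iic.2 (hij.trans hj)) (Set.mem_Iic.2 hj) hij
  have hL0 : 0 < L := by
    have : 0 ≤ ∑ i ∈ Icc 1 g, (lam i - lam 0) :=
      sum_nonneg fun i hi => sub_nonneg.2 (hle 0 i i.zero_le (mem_Icc.1 hi).2)
    linarith
  have hpg : 0 < p g := by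
    rcases g.eq_zero_or_pos with rfl | hg
    · rwa [hp0]
    rw [hp g hg le_rfl, sum_congr rfl fun j hj =>
      min_eq_right (sub_le_sub_right (hle j g (mem_Icc.1 hj).2 le_rfl) (lam 0))]
    linarith
  have hdec : ∀ i, 1 ≤ i → i < g → p (i + 1) < p i := by
    intro i hi hig
    have hstep : lam i - lam 0 < lam (i + 1) - lam 0 := sub_lt_sub_right (hlam i hig) _
    have := sum_min_lt_sum_min (s := Icc 1 g) (f := fun j => lam j - lam 0) hstep
      (mem_Icc.2 ⟨by omega, hig⟩) hstep
    rw [hp i hi hig.le, hp (i + 1) (by omega) hig]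
    linarith
  exact ⟨hpg, hdec, periodK_row_sum_pos hlam (hp0 ▸ hL0.le) hpg.le⟩

theorem p_decreasing_and_row_sums_pos (g : ℕ) (hg : 0 < g) (L : ℝ) (lam p : ℕ → ℝ)
    (hlam : ∀ i, i < g → lam i < lam (i + 1))
    (hL : 2 * ∑ i ∈ Finset.Icc 1 g, (lam i - lam 0) < L)
    (hp0 : p 0 = L)
    (hp : ∀ i, 1 ≤ i → i ≤ g →
      p i = L - 2 * ∑ j ∈ Finset.Icc 1 g, min (lam i - lam 0) (lam j - lam 0)) :
    (0 < p g) ∧ (∀ i, 1 ≤ i → i < g → p (i + 1) < p i) ∧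
      (∀ a : Fin g, 0 < ∑ b, periodK g lam p a b) :=
  p_decreasing_and_row_sums_pos_general g L lam p hlam hL hp0 hp
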